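/- With C = A ⊕ B ⊕ U and f = α∘∂ restricting to an isomorphism B → A, one has the direct sum decomposition C = ∂(B) ⊕ B ⊕ Û, where Û = (id − β)(U) and β = h ∘ f with h the inverse of f|_B. -/
import Mathlib


/-- In the setting of algebraic discrete Morse theory (`C = A ⊕ B ⊕ U`, `α` the
projection onto `A`, `f = α ∘ ∂` restricting to an isomorphism `B → A` with inverse
`h`, `β = h ∘ f`, and `Û = (id − β)(U)`): one has the direct sum decomposition
`C = ∂(B) ⊕ B ⊕ Û`. -/
theorem decomposition_dB_B_Uhat
    (R : Type) [CommRing R] (C : Type) [AddCommGroup C] [Module R C]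
    (d : C →ₗ[R] C) (hd : d ∘ₗ d = 0)
    (Cgr : ℤ → Submodule R C) (hfg : ∀ i, (Cgr i).FG)
    (hgr : ∀ i, ∀ x ∈ Cgr i, d x ∈ Cgr (i - 1))
    (A B U : Submodule R C)
    (hspan : A ⊔ B ⊔ U = ⊤)
    (hind : ∀ a ∈ A, ∀ b ∈ B, ∀ u ∈ U, a + b + u = 0 → a = 0 ∧ b = 0 ∧ u = 0)
    (α : C →ₗ[R] C)
    (hαA : ∀ a ∈ A, α a = a) (hαB : ∀ b ∈ B, α b = 0) (hαU : ∀ u ∈ U, α u = 0)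
    (h : C →ₗ[R] C) (hhB : ∀ x, h x ∈ B)
    (hinv1 : ∀ b ∈ B, h ((α ∘ₗ d) b) = b)
    (hinv2 : ∀ a ∈ A, (α ∘ₗ d) (h a) = a) :
    (Submodule.map d B ⊔ B ⊔ Submodule.map (LinearMap.id - h ∘ₗ (α ∘ₗ d)) U = ⊤) ∧
      (∀ x ∈ Submodule.map d B, ∀ y ∈ B,
        ∀ z ∈ Submodule.map (LinearMap.id - h ∘ₗ (α ∘ₗ d)) U,
          x + y + z = 0 → x = 0 ∧ y = 0 ∧ z = 0) := by
  set β : C →ₗ[R] C := h ∘ₗ (α ∘ₗ d) with hβ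
  constructor
  · rw [eq_top_iff, ← hspan]
    have hBS : B ≤ Submodule.map d B ⊔ B ⊔ Submodule.map (LinearMap.id - β) U :=
      fun b hb => Submodule.mem_sup_left (Submodule.mem_sup_right hb)
    have hUS : U ≤ Submodule.map d B ⊔ B ⊔ Submodule.map (LinearMap.id - β) U := by
      intro u hu
      have h2 : ((LinearMap.id - β : C →ₗ[R] C)) u ∈ Submodule.map (LinearMap.id - β) U :=
        ⟨u, hu, rfl⟩
      have he : u = β u + ((LinearMap.id - β : C →ₗ[R] C)) u := by
        simp [LinearMap.sub_apply]
      rw [he]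
      exact add_mem (hBS (hhB _)) (Submodule.mem_sup_right h2)
    have hAS : A ≤ Submodule.map d B ⊔ B ⊔ Submodule.map (LinearMap.id - β) U := by
      intro a ha
      have hx : d (h a) ∈ Submodule.map d B := ⟨h a, hhB a, rfl⟩
      have hmem : d (h a) ∈ A ⊔ B ⊔ U := hspan ▸ Submodule.mem_top
      obtain ⟨ab, hab, u, hu, heq⟩ := Submodule.mem_sup.mp hmem
      obtain ⟨a', ha', b, hb, heq2⟩ := Submodule.mem_sup.mp hab
      have hαa' : α (d (h a)) = a' := by
        rw [← heq, ← heq2, map_add, map_add, hαA a' ha', hαB b hb, hαU u hu,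
          add_zero, add_zero]
      have haa' : a = a' := by rw [← hαa']; exact (hinv2 a ha).symm
      have he : a = d (h a) - b - u := by
        rw [← heq, ← heq2, haa']; abel
      rw [he]
      exact sub_mem (sub_mem (Submodule.mem_sup_left (Submodule.mem_sup_left hx))
        (hBS hb)) (hUS hu)
    exact sup_le (sup_le hAS hBS) hUS
  · rintro x ⟨b, hb, rfl⟩ y hy z ⟨u, hu, rfl⟩ hsum
    have hβuB : β u ∈ B := hhB _
    have hα0 : α (d b) = 0 := by
      have := congrArg α hsum
      rw [map_add, map_add, hαB y hy] at this
      have hz0 : α (((LinearMap.id - β : C →ₗ[R] C)) u) = 0 := by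
        rw [LinearMap.sub_apply, LinearMap.id_apply, map_sub, hαU u hu,
          hαB _ hβuB, sub_zero]
      rw [hz0, map_zero] at this
      simpa using this
    have hb0 : b = 0 := by
      have := hinv1 b hb
      rw [LinearMap.comp_apply, hα0, map_zero] at this
      exact this.symm
    have hdb0 : d b = 0 := by rw [hb0, map_zero]
    have hsum2 : (0 : C) + (y - β u) + u = 0 := by
      have : y + (u - β u) = 0 := by
        rw [hdb0, zero_add] at hsum
        simpa [LinearMap.sub_apply] using hsum
      rw [zero_add]
      linear_combination (norm := abel) this
    obtain ⟨-, hB0, hu0⟩ := hind 0 A.zero_mem (y - β u) (sub_mem hy hβuB) u hu hsum2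
    have hβu0 : β u = 0 := by rw [hu0, map_zero]
    have hy0 : y = 0 := by
      have := hB0; rw [hβu0, sub_zero] at this; exact this
    refine ⟨hdb0, hy0, ?_⟩
    rw [hu0, map_zero]
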